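/- arXiv:1511.09469 — 9 statements merged into one kernel-verified Lean document; each statement's English description precedes it below -/
import Mathlib

section
/- For any permutation π of Z/(2n+1)Z and the rotation ρ(x) = x+1, the writhe satisfies w(ρ∘π) = w(π). -/
/-!
Adding `1` to both of two distinct residues `a ≠ b` modulo `m + 1` preserves the order of their
representatives, unless one of them is `-1`, which wraps around to `0`; so the sign of
`(b + 1) - (a + 1)` differs from that of `b - a` by `2 [a = -1] - 2 [b = -1]`. Summed over all
pairs `(i, i + j)` with `1 ≤ j ≤ n`, these corrections cancel: both `i` and `i + j` run over all
of `ℤ/(2n+1)` for each fixed `j`.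
-/

/-- The writhe of a permutation of `ZMod (2n+1)`, comparing values via their
representatives in `{0,…,2n}`:
`w(π) = ∑_{i=0}^{2n} ∑_{j=1}^{n} sign(π(i+j) − π(i))`. -/
def writheP (n : ℕ) (π : ZMod (2 * n + 1) → ZMod (2 * n + 1)) : ℤ :=
  ∑ i : ZMod (2 * n + 1), ∑ j ∈ Finset.range n,
    if (π i).val < (π (i + ((j + 1 : ℕ) : ZMod (2 * n + 1)))).val then 1 else -1

open Finset

def valSign {m : ℕ} (a b : ZMod m) : ℤ :=
  if a.val < b.val then 1 else -1

namespace ZMod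

variable {m : ℕ}

theorem val_lt_of_ne_neg_one {a : ZMod (m + 1)} (ha : a ≠ -1) : a.val < m := by
  have hne : a.val ≠ m := fun h => ha (val_injective _ (by rw [h, val_neg_one]))
  have := a.val_lt
  omega

theorem val_add_one_of_ne_neg_one {a : ZMod (m + 1)} (ha : a ≠ -1) :
    (a + 1).val = a.val + 1 := by
  have := val_lt_of_ne_neg_one ha
  rw [val_add, val_one_eq_one_mod, Nat.one_mod_eq_one.mpr (by omega),
    Nat.mod_eq_of_lt (by omega)]

theorem natCast_ne_zero_of_pos_of_lt {k : ℕ} (hk₀ : 0 < k) (hk : k < m) : (k : ZMod m) ≠ 0 := by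
  rw [Ne, natCast_eq_zero_iff]
  exact fun h => absurd (Nat.le_of_dvd hk₀ h) (by omega)

end ZMod

theorem valSign_add_one {m : ℕ} {a b : ZMod (m + 1)} (hab : a ≠ b) :
    valSign (a + 1) (b + 1) =
      valSign a b + ((if a = -1 then 2 else 0) - (if b = -1 then 2 else 0)) := by
  have hwrap : (-1 + 1 : ZMod (m + 1)) = 0 := neg_add_cancel 1
  unfold valSign
  by_cases ha : a = -1 <;> by_cases hb : b = -1
  · exact absurd (ha.trans hb.symm) hab
  · subst ha
    have := ZMod.val_lt_of_ne_neg_one hb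
    simp only [hwrap, ZMod.val_add_one_of_ne_neg_one hb, ZMod.val_zero, ZMod.val_neg_one,
      if_pos, if_neg hb]
    split_ifs <;> omega
  · subst hb
    have := ZMod.val_lt_of_ne_neg_one ha
    simp only [hwrap, ZMod.val_add_one_of_ne_neg_one ha, ZMod.val_zero, ZMod.val_neg_one,
      if_pos, if_neg ha]
    split_ifs <;> omega
  · simp only [ZMod.val_add_one_of_ne_neg_one ha, ZMod.val_add_one_of_ne_neg_one hb,
      if_neg ha, if_neg hb]
    split_ifs <;> omega

theorem sum_sum_sub_comp_add_eq_zero {G ι M : Type*} [AddCommGroup G] [Fintype G]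
    [AddCommGroup M] (s : Finset ι) (c : ι → G) (g : G → M) :
    ∑ i, ∑ j ∈ s, (g i - g (i + c j)) = 0 := by
  rw [sum_comm]
  refine sum_eq_zero fun j _ => ?_
  rw [sum_sub_distrib, sub_eq_zero]
  exact (Equiv.sum_comp (Equiv.addRight (c j)) g).symm

/-- The writhe is invariant under left rotation: `w(ρ ∘ π) = w(π)` where `ρ(x) = x+1`. -/
theorem writhe_rotation_left (n : ℕ) (π : Equiv.Perm (ZMod (2 * n + 1))) :
    writheP n (fun x => π x + 1) = writheP n π := by
  set c : ℕ → ZMod (2 * n + 1) := fun j => ((j + 1 : ℕ) : ZMod (2 * n + 1))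
  set wraps : ZMod (2 * n + 1) → ℤ := fun x => if π x = -1 then 2 else 0
  have hne : ∀ i, ∀ j ∈ range n, π i ≠ π (i + c j) := fun i j hj h => by
    have hj : j < n := mem_range.mp hj
    exact ZMod.natCast_ne_zero_of_pos_of_lt (Nat.succ_pos j) (by omega)
      (left_eq_add.mp (π.injective h))
  calc writheP n (fun x => π x + 1)
      = ∑ i, ∑ j ∈ range n, (valSign (π i) (π (i + c j)) + (wraps i - wraps (i + c j))) :=
        sum_congr rfl fun i _ => sum_congr rfl fun j hj => valSign_add_one (hne i j hj)
    _ = writheP n π + ∑ i, ∑ j ∈ range n, (wraps i - wraps (i + c j)) := by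
        simp only [sum_add_distrib]
        rfl
    _ = writheP n π := by rw [sum_sum_sub_comp_add_eq_zero, add_zero]
end

section
/- For every permutation σ ∈ S_{2n+1}, letting τ(x) = 2x mod (2n+1), the writhe of σ∘τ equals the bi-alternating inversion number of σ: w(σ∘τ) = Σ_{0 ≤ y < x ≤ 2n} (−1)^{x+y} sign(σ(x) − σ(y)). -/
/-- The bi-alternating inversion number
`ι̂̂(σ) = ∑_{0 ≤ y < x ≤ 2n} (−1)^{x+y} sign(σ(x) − σ(y))`. -/
def biAlt (n : ℕ) (σ : ZMod (2 * n + 1) → ZMod (2 * n + 1)) : ℤ :=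
  ∑ x ∈ Finset.range (2 * n + 1), ∑ y ∈ Finset.range x,
    (-1 : ℤ) ^ (x + y) *
      (if (σ ((y : ℕ) : ZMod (2 * n + 1))).val < (σ ((x : ℕ) : ZMod (2 * n + 1))).val
        then 1 else -1)

open Finset

theorem val_add_natCast_eq_or {m : ℕ} [NeZero m] (c : ZMod m) {e : ℕ} (he : e < m) :
    (c + e).val = c.val + e ∨ (c + e).val + m = c.val + e := by
  have hv : (e : ZMod m).val = e := ZMod.val_cast_of_lt he
  rcases lt_or_ge (c.val + e) m with h | h
  · left
    rw [ZMod.val_add_of_lt (by rwa [hv]), hv]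
  · right
    have := ZMod.val_add_val_of_le (a := c) (b := e) (by rwa [hv])
    rw [hv] at this
    exact this.symm

theorem sum_even_offset_eq_sum_pairs {M : Type*} [AddCommMonoid M] (n : ℕ)
    (F : ZMod (2 * n + 1) → ZMod (2 * n + 1) → M) :
    ∑ a : ZMod (2 * n + 1), ∑ j ∈ range n, F a (a + ((2 * (j + 1) : ℕ) : ZMod (2 * n + 1))) =
      ∑ x ∈ range (2 * n + 1), ∑ y ∈ range x, if Even (x + y) then F y x else F x y := by
  rw [← sum_product' univ, sum_sigma']
  have hval (a : ZMod (2 * n + 1)) {j : ℕ} (hj : j < n) :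
      let b := a + ((2 * (j + 1) : ℕ) : ZMod (2 * n + 1))
      a.val < 2 * n + 1 ∧ b.val < 2 * n + 1 ∧
        (b.val = a.val + 2 * (j + 1) ∨ b.val + (2 * n + 1) = a.val + 2 * (j + 1)) :=
    ⟨a.val_lt, ZMod.val_lt _, val_add_natCast_eq_or a (by omega)⟩
  refine sum_bij'
    (fun p _ => ⟨max p.1.val (p.1 + ((2 * (p.2 + 1) : ℕ) : ZMod (2 * n + 1))).val,
      min p.1.val (p.1 + ((2 * (p.2 + 1) : ℕ) : ZMod (2 * n + 1))).val⟩)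
    (fun q _ => if Even (q.1 + q.2) then ((q.2 : ZMod (2 * n + 1)), (q.1 - q.2) / 2 - 1)
      else ((q.1 : ZMod (2 * n + 1)), (2 * n + 1 - (q.1 - q.2)) / 2 - 1)) ?_ ?_ ?_ ?_ ?_
  · rintro ⟨a, j⟩ hp
    simp only [mem_product, mem_univ, mem_range, true_and, mem_sigma] at hp ⊢
    have := hval a hp
    omega
  · rintro ⟨x, y⟩ hq
    simp only [mem_range, mem_sigma] at hq
    split_ifs <;> simp only [mem_product, mem_univ, mem_range, true_and] <;> omega
  · rintro ⟨a, j⟩ hp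
    simp only [mem_product, mem_univ, mem_range, true_and] at hp
    dsimp only
    obtain ⟨ha, hb, hab | hab⟩ := hval a hp
    · rw [max_eq_right (by omega), min_eq_left (by omega), if_pos (by rw [Nat.even_iff]; omega),
        ZMod.natCast_zmod_val]
      congr 1; omega
    · rw [max_eq_left (by omega), min_eq_right (by omega), if_neg (by rw [Nat.not_even_iff]; omega),
        ZMod.natCast_zmod_val]
      congr 1; omega
  · rintro ⟨x, y⟩ hq
    simp only [mem_sigma, mem_range] at hq
    dsimp only
    split_ifs with hpar
    · rw [Nat.even_iff] at hpar
      obtain ⟨-, hm, hb | hb⟩ := hval (y : ZMod (2 * n + 1)) (j := (x - y) / 2 - 1) (by omega) <;>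
      · rw [ZMod.val_cast_of_lt (by omega)] at hb ⊢
        simp only [Sigma.mk.injEq, heq_eq_eq]
        omega
    · rw [Nat.not_even_iff] at hpar
      obtain ⟨-, hm, hb | hb⟩ := hval (x : ZMod (2 * n + 1)) (j := (2 * n + 1 - (x - y)) / 2 - 1)
        (by omega) <;>
      · rw [ZMod.val_cast_of_lt hq.1] at hb ⊢
        simp only [Sigma.mk.injEq, heq_eq_eq]
        omega
  · rintro ⟨a, j⟩ hp
    simp only [mem_product, mem_univ, mem_range, true_and] at hp
    dsimp only
    obtain ⟨ha, hb, hab | hab⟩ := hval a hp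
    · rw [max_eq_right (by omega), min_eq_left (by omega), if_pos (by rw [Nat.even_iff]; omega),
        ZMod.natCast_zmod_val, ZMod.natCast_zmod_val]
    · rw [max_eq_left (by omega), min_eq_right (by omega), if_neg (by rw [Nat.not_even_iff]; omega),
        ZMod.natCast_zmod_val, ZMod.natCast_zmod_val]

theorem ite_lt_swap_of_ne {a b : ℕ} (h : a ≠ b) :
    (if b < a then (1 : ℤ) else -1) = -(if a < b then 1 else -1) := by
  split_ifs <;> omega

/-- With `τ(x) = 2x mod (2n+1)`, the writhe of `σ ∘ τ` equals the bi-alternating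
inversion number of `σ`. -/
theorem writhe_eq_biAlt (n : ℕ) (σ : Equiv.Perm (ZMod (2 * n + 1))) :
    writheP n (fun x => σ (2 * x)) = biAlt n σ := by
  let F : ZMod (2 * n + 1) → ZMod (2 * n + 1) → ℤ :=
    fun u v => if (σ u).val < (σ v).val then 1 else -1
  have hdouble : Function.Bijective fun x : ZMod (2 * n + 1) => 2 * x :=
    (ZMod.unitOfCoprime 2 (Nat.coprime_two_left.2 (odd_two_mul_add_one n))).mulLeft_bijective
  calc writheP n (fun x => σ (2 * x))
      = ∑ a, ∑ j ∈ range n, F a (a + ((2 * (j + 1) : ℕ) : ZMod (2 * n + 1))) :=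
        Fintype.sum_bijective _ hdouble _ _ fun i => sum_congr rfl fun j _ => by
          have h2 : 2 * (i + ((j + 1 : ℕ) : ZMod (2 * n + 1))) =
              2 * i + ((2 * (j + 1) : ℕ) : ZMod (2 * n + 1)) := by
            push_cast; ring
          simp only [F, h2]
    _ = ∑ x ∈ range (2 * n + 1), ∑ y ∈ range x, if Even (x + y) then F y x else F x y :=
        sum_even_offset_eq_sum_pairs n F
    _ = biAlt n σ := sum_congr rfl fun x hx => sum_congr rfl fun y hy => by
        rw [mem_range] at hx hy
        by_cases hpar : Even (x + y)
        · rw [if_pos hpar, hpar.neg_one_pow, one_mul]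
        · have hyx : (σ y).val ≠ (σ x).val := by
            rw [ne_eq, (ZMod.val_injective _).eq_iff, σ.injective.eq_iff,
              ZMod.natCast_eq_natCast_iff', Nat.mod_eq_of_lt hx, Nat.mod_eq_of_lt (by omega)]
            omega
          rw [if_neg hpar, (Nat.not_even_iff_odd.1 hpar).neg_one_pow, neg_one_mul]
          exact ite_lt_swap_of_ne hyx
end

section
/- The bi-alternating inversion number is invariant under rotation: for all σ ∈ S_{2n+1}, ι̂̂(σ∘ρ) = ι̂̂(σ), where ρ(x) = x+1 mod (2n+1). -/
/-!
Abstract the sign term to a function `t` on pairs of residues mod `k + 1` with `t b a = -t a b`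
for `a ≠ b`. Shifting both indices by one maps the pairs `y < x < k` onto the pairs `1 ≤ y < x ≤ k`
with the same sign `(-1)^(x+y)`. The leftover pairs `(y, k)` of the rotated sum become `(y + 1, 0)`;
as `k` is even, antisymmetry turns their terms into exactly those of the pairs `(0, y + 1)` missing
from the unrotated sum.
-/

open Finset

def altPairSum (k : ℕ) (t : ZMod (k + 1) → ZMod (k + 1) → ℤ) : ℤ :=
  ∑ x ∈ range (k + 1), ∑ y ∈ range x, (-1 : ℤ) ^ (x + y) * t y x

namespace altPairSum

variable {k : ℕ} (t : ZMod (k + 1) → ZMod (k + 1) → ℤ)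

theorem eq_shift_add_first :
    altPairSum k t = ∑ x ∈ range k, ∑ y ∈ range x, (-1 : ℤ) ^ (x + y) * t ↑(y + 1) ↑(x + 1) +
      ∑ x ∈ range k, (-1 : ℤ) ^ (x + 1) * t 0 ↑(x + 1) := by
  rw [altPairSum, sum_range_succ', range_zero, sum_empty, add_zero, ← sum_add_distrib]
  refine sum_congr rfl fun x _ => ?_
  rw [sum_range_succ']
  congr 1
  exact sum_congr rfl fun y _ => by ring_nf

theorem rotate_eq_shift_add_last :
    altPairSum k (fun a b => t (a + 1) (b + 1)) =
      ∑ x ∈ range k, ∑ y ∈ range x, (-1 : ℤ) ^ (x + y) * t ↑(y + 1) ↑(x + 1) +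
      ∑ y ∈ range k, (-1 : ℤ) ^ (k + y) * t ↑(y + 1) 0 := by
  have hwrap : ((k : ZMod (k + 1)) + 1) = 0 := by exact_mod_cast ZMod.natCast_self (k + 1)
  simp only [altPairSum, sum_range_succ _ k, hwrap, Nat.cast_succ]

theorem rotate_eq (hk : Even k) (ht : ∀ a b, a ≠ b → t b a = -t a b) :
    altPairSum k (fun a b => t (a + 1) (b + 1)) = altPairSum k t := by
  rw [rotate_eq_shift_add_last, eq_shift_add_first]
  congr 1
  refine sum_congr rfl fun y hy => ?_
  have hy0 : ((y + 1 : ℕ) : ZMod (k + 1)) ≠ 0 := by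
    rw [Ne, ZMod.natCast_eq_zero_iff]
    exact Nat.not_dvd_of_pos_of_lt y.succ_pos (by simpa using hy)
  rw [ht _ _ hy0, pow_add, hk.neg_one_pow, pow_succ]
  ring

end altPairSum

theorem ite_lt_neg_swap {α : Type*} [LinearOrder α] {a b : α} (h : a ≠ b) :
    (if b < a then (1 : ℤ) else -1) = -(if a < b then 1 else -1) := by
  rcases h.lt_or_gt with hab | hba
  · simp [hab, hab.not_gt]
  · simp [hba, hba.not_gt]

/-- The bi-alternating inversion number is invariant under rotation:
`ι̂̂(σ ∘ ρ) = ι̂̂(σ)` where `ρ(x) = x + 1 mod (2n+1)`. -/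
theorem biAlt_rotation (n : ℕ) (σ : Equiv.Perm (ZMod (2 * n + 1))) :
    biAlt n (fun x => σ (x + 1)) = biAlt n σ := by
  refine altPairSum.rotate_eq (fun a b => if (σ a).val < (σ b).val then 1 else -1)
    (even_two_mul n) fun a b hab => ite_lt_neg_swap ?_
  exact fun h => hab (σ.injective (ZMod.val_injective _ h))
end

section
/- If σ ∈ S_{2n+1} fixes 2n (i.e. σ(2n) = 2n), then the terms with x = 2n in the bi-alternating inversion number sum to zero; consequently ι̂̂(σ) equals ι̂̂ of the restriction of σ to {0,…,2n−1}, viewed as an element of S_{2n}. -/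
/-!
Since `σ` is injective and maps `{0,…,2n}` into itself with `σ(2n) = 2n`, every `σ(y)` with
`y < 2n` is smaller than `σ(2n)`. All signs in the row `x = 2n` are therefore `+1`, and the row
reduces to `∑_{y<2n} (-1)^y`, which vanishes because `2n` is even.
-/

/-- The bi-alternating inversion number of a function on `{0,…,N−1}`:
`ι̂̂(σ) = ∑_{0 ≤ y < x ≤ N−1} (−1)^{x+y} sign(σ(x) − σ(y))`. -/
def biAltN (N : ℕ) (σ : ℕ → ℕ) : ℤ :=
  ∑ x ∈ Finset.range N, ∑ y ∈ Finset.range x,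
    (-1 : ℤ) ^ (x + y) * (if σ y < σ x then 1 else -1)

theorem biAltN_succ (N : ℕ) (σ : ℕ → ℕ) :
    biAltN (N + 1) σ = biAltN N σ +
      ∑ y ∈ Finset.range N, (-1 : ℤ) ^ (N + y) * (if σ y < σ N then 1 else -1) :=
  Finset.sum_range_succ _ _

theorem apply_lt_of_injective_of_mapsTo_of_apply_eq {m : ℕ} {σ : ℕ → ℕ}
    (hinj : Function.Injective σ) (hmap : ∀ x, x < m + 1 → σ x < m + 1) (hfix : σ m = m)
    {y : ℕ} (hy : y < m) : σ y < m := by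
  have hne : σ y ≠ m := fun h => hy.ne (hinj (h.trans hfix.symm))
  have := hmap y (by omega)
  omega

theorem sum_range_neg_one_pow_mul_sign_eq_zero {m : ℕ} {σ : ℕ → ℕ} (hm : Even m)
    (hmax : ∀ y < m, σ y < σ m) :
    ∑ y ∈ Finset.range m, (-1 : ℤ) ^ (m + y) * (if σ y < σ m then 1 else -1) = 0 := by
  calc ∑ y ∈ Finset.range m, (-1 : ℤ) ^ (m + y) * (if σ y < σ m then 1 else -1)
      = ∑ y ∈ Finset.range m, (-1 : ℤ) ^ y := by
        refine Finset.sum_congr rfl fun y hy => ?_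
        rw [if_pos (hmax y (Finset.mem_range.mp hy)), mul_one, pow_add, hm.neg_one_pow, one_mul]
    _ = 0 := by rw [neg_one_geom_sum, if_pos hm]

/-- If `σ ∈ S_{2n+1}` fixes `2n`, then the terms with `x = 2n` in the
bi-alternating inversion number sum to zero, and consequently `ι̂̂(σ)` equals `ι̂̂`
of the restriction of `σ` to `{0,…,2n−1}`, an element of `S_{2n}`. -/
theorem biAlt_delete_top (n : ℕ) (σ : ℕ → ℕ) (hinj : Function.Injective σ)
    (hmap : ∀ x, x < 2 * n + 1 → σ x < 2 * n + 1) (hfix : σ (2 * n) = 2 * n) :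
    (∑ y ∈ Finset.range (2 * n),
        (-1 : ℤ) ^ (2 * n + y) * (if σ y < σ (2 * n) then 1 else -1)) = 0 ∧
    biAltN (2 * n + 1) σ = biAltN (2 * n) σ := by
  have top_row := sum_range_neg_one_pow_mul_sign_eq_zero (even_two_mul n) fun y hy =>
    hfix ▸ apply_lt_of_injective_of_mapsTo_of_apply_eq hinj hmap hfix hy
  exact ⟨top_row, by rw [biAltN_succ, top_row, add_zero]⟩
end

section
/- For every permutation π ∈ S_{2n+1}, |w(π)| ≤ n². -/
open Finset

theorem sum_ite_lt_le {ι : Type*} (s : Finset ι) (a : ι → ℕ) (ha : Set.InjOn a s) (b : ℕ) :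
    ∑ j ∈ s, (if a j < b then (1 : ℤ) else -1) ≤ 2 * min b #s - #s := by
  have hb : #{j ∈ s | a j < b} ≤ b := by
    simpa using card_le_card_of_injOn a (t := range b) (fun j hj => by simp_all)
      (ha.mono (filter_subset _ _))
  have hs : #{j ∈ s | a j < b} ≤ #s := card_filter_le _ _
  have hsplit := card_filter_add_card_filter_not (s := s) (fun j => a j < b)
  rw [sum_ite, sum_const, sum_const]
  simp only [nsmul_eq_mul]
  push_cast
  omega

theorem sum_range_two_mul_min_sub (n : ℕ) :
    ∑ v ∈ range (2 * n + 1), (2 * min (v : ℤ) n - n) = (n : ℤ) ^ 2 := by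
  have gauss : (∑ v ∈ range (n + 1), (v : ℤ)) * 2 = ((n : ℤ) + 1) * n := by
    have := sum_range_id_mul_two (n + 1)
    rw [Nat.add_sub_cancel] at this
    rw [← Nat.cast_sum]; exact_mod_cast this
  have low : ∀ v ∈ range (n + 1), 2 * min (v : ℤ) n - n = 2 * v - n := fun v hv => by
    rw [min_eq_left (by simp at hv; omega)]
  have high : ∀ v ∈ range n, 2 * min ((n + 1 + v : ℕ) : ℤ) n - n = n := fun v _ => by
    rw [min_eq_right (by omega)]; ring
  rw [show 2 * n + 1 = (n + 1) + n by ring, sum_range_add, sum_congr rfl low,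
    sum_congr rfl high, sum_sub_distrib, ← mul_sum]
  simp only [sum_const, card_range, nsmul_eq_mul]
  push_cast
  linear_combination gauss

theorem ZMod.val_neg_one_sub {m : ℕ} (x : ZMod (m + 1)) : (-1 - x).val = m - x.val := by
  have hx : x.val ≤ m := Nat.lt_succ_iff.mp x.val_lt
  have hm : ((m + 1 : ℕ) : ZMod (m + 1)) = 0 := ZMod.natCast_self _
  have : (-1 - x : ZMod (m + 1)) = ((m - x.val : ℕ) : ZMod (m + 1)) := by
    rw [Nat.cast_sub hx, ZMod.natCast_val, ZMod.cast_id', id]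
    push_cast at hm
    linear_combination -hm
  rw [this, ZMod.val_cast_of_lt (by omega)]

theorem ZMod.natCast_injOn_range (m : ℕ) : Set.InjOn (Nat.cast : ℕ → ZMod m) (range m) :=
  fun a ha b hb h => by
    rw [coe_range, Set.mem_Iio] at ha hb
    rwa [ZMod.natCast_eq_natCast_iff', Nat.mod_eq_of_lt ha, Nat.mod_eq_of_lt hb] at h

theorem writheP_eq_sum_preimage (n : ℕ) (π : Equiv.Perm (ZMod (2 * n + 1))) :
    writheP n π = ∑ b : ZMod (2 * n + 1), ∑ j ∈ range n,
      if (π (π.symm b - ((j + 1 : ℕ) : ZMod (2 * n + 1)))).val < b.val then 1 else -1 := by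
  rw [writheP, sum_comm]
  refine (sum_congr rfl fun j _ => ?_).trans sum_comm
  refine Fintype.sum_equiv ((Equiv.addRight ((j + 1 : ℕ) : ZMod (2 * n + 1))).trans π) _ _
    fun i => ?_
  simp only [Equiv.trans_apply, Equiv.coe_addRight, Equiv.symm_apply_apply, add_sub_cancel_right]

theorem writheP_le_sq (n : ℕ) (π : Equiv.Perm (ZMod (2 * n + 1))) :
    writheP n π ≤ (n : ℤ) ^ 2 := by
  have hinj (b : ZMod (2 * n + 1)) :
      Set.InjOn (fun j : ℕ => (π (π.symm b - ((j + 1 : ℕ) : ZMod (2 * n + 1)))).val) (range n) :=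
    fun i hi j hj h => by
      simp only [coe_range, Set.mem_Iio] at hi hj
      have := (ZMod.natCast_injOn_range (2 * n + 1)) (by simp; omega) (by simp; omega)
        (sub_right_injective (π.injective (ZMod.val_injective _ h)))
      omega
  calc writheP n π
      ≤ ∑ b : ZMod (2 * n + 1), (2 * min (b.val : ℤ) n - n) := by
        rw [writheP_eq_sum_preimage]
        refine sum_le_sum fun b _ => ?_
        simpa using sum_ite_lt_le _ _ (hinj b) b.val
    _ = (n : ℤ) ^ 2 :=
        (Fin.sum_univ_eq_sum_range (fun v => 2 * min (v : ℤ) n - n) _).trans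
          (sum_range_two_mul_min_sub n)

theorem writheP_comp_neg_one_sub (n : ℕ) (π : Equiv.Perm (ZMod (2 * n + 1))) :
    writheP n (π.trans (Equiv.subLeft (-1))) = -writheP n π := by
  simp only [writheP, ← sum_neg_distrib]
  refine sum_congr rfl fun i _ => sum_congr rfl fun j hj => ?_
  have hshift : ((j + 1 : ℕ) : ZMod (2 * n + 1)) ≠ 0 := by
    simpa using (ZMod.natCast_injOn_range (2 * n + 1)).ne
      (by simp at hj ⊢; omega) (by simp) (Nat.succ_ne_zero j)
  have hne : (π i).val ≠ (π (i + ((j + 1 : ℕ) : ZMod (2 * n + 1)))).val :=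
    (ZMod.val_injective _).ne (π.injective.ne (by simpa using hshift))
  have := (π i).val_lt
  have := (π (i + ((j + 1 : ℕ) : ZMod (2 * n + 1)))).val_lt
  simp only [Equiv.trans_apply, Equiv.subLeft_apply, ZMod.val_neg_one_sub]
  split_ifs <;> omega

/-- For every permutation `π ∈ S_{2n+1}`, `|w(π)| ≤ n²`. -/
theorem writhe_bound (n : ℕ) (π : Equiv.Perm (ZMod (2 * n + 1))) :
    |writheP n π| ≤ (n : ℤ) ^ 2 := by
  have hreflect := writheP_le_sq n (π.trans (Equiv.subLeft (-1)))
  rw [writheP_comp_neg_one_sub] at hreflect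
  exact abs_le.mpr ⟨by linarith, writheP_le_sq n π⟩
end

section
/- For every π ∈ S_{2n+1} and every adjacent circular transposition τ_x = (x, x+1) with x ∈ Z_{2n+1}, the writhe changes by exactly ±2: w(π∘τ_x) − w(π) ∈ {−2, +2}. -/
open Finset

def ltSign {β : Type*} [LinearOrder β] (a b : β) : ℤ := if a < b then 1 else -1

section LtSign
variable {β : Type*} [LinearOrder β] {a b c : β}

lemma ltSign_swap (h : a ≠ b) : ltSign b a = -ltSign a b := by
  unfold ltSign
  split_ifs <;> first | rfl | order

lemma ltSign_cycle (hab : a ≠ b) :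
    ltSign a b + ltSign b c + ltSign c a = 1 ∨ ltSign a b + ltSign b c + ltSign c a = -1 := by
  unfold ltSign
  split_ifs <;> first | (exfalso; order) | norm_num

lemma sum_ltSign_cycle {α : Type*} [DecidableEq α] {f : α → β} (hf : Function.Injective f)
    {a b c : α} (hab : a ≠ b) (hbc : b ≠ c) (hca : c ≠ a) :
    ∑ p ∈ {(a, b), (b, c), (c, a)}, ltSign (f p.1) (f p.2) = 1 ∨
      ∑ p ∈ {(a, b), (b, c), (c, a)}, ltSign (f p.1) (f p.2) = -1 := by
  rw [sum_insert (by simp [hab, hca.symm]), sum_insert (by simp [hbc]), sum_singleton,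
    ← add_assoc]
  exact ltSign_cycle (hf.ne hab)

end LtSign

def IsTournament {α : Type*} (S : Finset (α × α)) : Prop :=
  ∀ a b, (a, b) ∈ S ↔ a ≠ b ∧ (b, a) ∉ S

namespace IsTournament
variable {α : Type*} {S T : Finset (α × α)}

lemma ne_of_mem (hS : IsTournament S) {a b : α} (h : (a, b) ∈ S) : a ≠ b :=
  ((hS a b).1 h).1

lemma map_prodCongr (hS : IsTournament S) (σ : Equiv.Perm α) :
    IsTournament (S.map (σ.prodCongr σ).toEmbedding) := by
  intro a b
  simp only [mem_map_equiv, Equiv.prodCongr_symm, Equiv.prodCongr_apply, Prod.map]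
  rw [hS, ne_eq, σ.symm.injective.eq_iff]

variable [DecidableEq α]

lemma sdiff_eq_map_prodComm (hS : IsTournament S) (hT : IsTournament T) :
    T \ S = (S \ T).map (Equiv.prodComm α α).toEmbedding := by
  ext ⟨a, b⟩
  simp only [mem_map_equiv, Equiv.prodComm_symm, Equiv.prodComm_apply, Prod.swap_prod_mk,
    mem_sdiff]
  constructor
  · rintro ⟨hab, hab'⟩
    exact ⟨(hS b a).2 ⟨(hT.ne_of_mem hab).symm, hab'⟩, ((hT a b).1 hab).2⟩
  · rintro ⟨hba, hba'⟩
    exact ⟨(hT a b).2 ⟨(hS.ne_of_mem hba).symm, hba'⟩, ((hS b a).1 hba).2⟩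

lemma sum_sub_sum {M : Type*} [AddCommGroup M] (hS : IsTournament S) (hT : IsTournament T)
    {f : α × α → M} (hf : ∀ a b, a ≠ b → f (b, a) = -f (a, b)) :
    ∑ p ∈ S, f p - ∑ p ∈ T, f p = 2 • ∑ p ∈ S \ T, f p := by
  have hswap : ∑ p ∈ T \ S, f p = -∑ p ∈ S \ T, f p := by
    rw [hS.sdiff_eq_map_prodComm hT, sum_map, ← sum_neg_distrib]
    exact sum_congr rfl fun p hp => hf p.1 p.2 (hS.ne_of_mem (mem_sdiff.1 hp).1)
  rw [← sum_sdiff_sub_sum_sdiff, hswap, sub_neg_eq_add, two_nsmul]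

end IsTournament

lemma ZMod.val_sub_eq_ite {m : ℕ} [NeZero m] (a b : ZMod m) :
    (a - b).val = if b.val ≤ a.val then a.val - b.val else m + a.val - b.val := by
  split_ifs with h
  · exact ZMod.val_sub h
  · have hab : b - a ≠ 0 := sub_ne_zero.2 fun hba => h (hba ▸ le_rfl)
    rw [← neg_sub, ZMod.neg_val, if_neg hab, ZMod.val_sub (not_le.1 h).le]
    have := a.val_lt
    omega

def forwardPairs (n : ℕ) : Finset (ZMod (2 * n + 1) × ZMod (2 * n + 1)) :=
  univ.filter fun p => 1 ≤ (p.2 - p.1).val ∧ (p.2 - p.1).val ≤ n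

section ForwardPairs
variable {n : ℕ}

lemma mem_forwardPairs {a b : ZMod (2 * n + 1)} :
    (a, b) ∈ forwardPairs n ↔ 1 ≤ (b - a).val ∧ (b - a).val ≤ n := by
  simp [forwardPairs]

lemma isTournament_forwardPairs : IsTournament (forwardPairs n) := by
  intro a b
  rw [mem_forwardPairs, mem_forwardPairs, ← neg_sub b a, ZMod.neg_val, ne_comm, ne_eq,
    ← sub_eq_zero]
  simp only [← ZMod.val_eq_zero]
  have := (b - a).val_lt
  split_ifs <;> omega

lemma writheP_eq_sum_forwardPairs (f : ZMod (2 * n + 1) → ZMod (2 * n + 1)) :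
    writheP n f = ∑ p ∈ forwardPairs n, ltSign (f p.1).val (f p.2).val := by
  rw [writheP, ← sum_product']
  refine sum_nbij' (fun q => (q.1, q.1 + ((q.2 + 1 : ℕ) : ZMod (2 * n + 1))))
    (fun p => (p.1, (p.2 - p.1).val - 1)) ?_ ?_ ?_ ?_ (fun _ _ => rfl)
  all_goals
    rintro ⟨a, b⟩ h
    simp only [mem_product, mem_univ, mem_range, true_and, mem_forwardPairs] at h ⊢
  · rw [add_sub_cancel_left, ZMod.val_natCast, Nat.mod_eq_of_lt (by omega)]
    omega
  · omega
  · rw [add_sub_cancel_left, ZMod.val_natCast, Nat.mod_eq_of_lt (by omega)]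
    simp
  · rw [Nat.sub_add_cancel h.1, ZMod.natCast_val, ZMod.cast_id', id, add_sub_cancel]

lemma mem_forwardPairs_swap_zero_one (hn : 1 ≤ n) (u v : ZMod (2 * n + 1)) :
    ((u, v) ∈ forwardPairs n ∧ (Equiv.swap 0 1 u, Equiv.swap 0 1 v) ∉ forwardPairs n) ↔
      (u, v) = (0, 1) ∨ (u, v) = (1, (n + 1 : ZMod (2 * n + 1))) ∨
        (u, v) = ((n + 1 : ZMod (2 * n + 1)), 0) := by
  have hval_one : (1 : ZMod (2 * n + 1)).val = 1 := by
    rw [ZMod.val_one_eq_one_mod, Nat.mod_eq_of_lt (by omega)]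
  have hval_succ : (n + 1 : ZMod (2 * n + 1)).val = n + 1 := by
    rw [← Nat.cast_succ, ZMod.val_natCast_of_lt (by omega)]
  have hval_inj (w w' : ZMod (2 * n + 1)) : w = w' ↔ w.val = w'.val :=
    (ZMod.val_injective _).eq_iff.symm
  have hval_swap (w : ZMod (2 * n + 1)) : (Equiv.swap 0 1 w).val =
      if w.val = 0 then 1 else if w.val = 1 then 0 else w.val := by
    rw [Equiv.swap_apply_def]
    simp only [hval_inj w, ZMod.val_zero, hval_one]
    split_ifs <;> simp [hval_one]
  simp only [mem_forwardPairs, ZMod.val_sub_eq_ite, hval_swap, Prod.mk.injEq, hval_inj u,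
    hval_inj v, ZMod.val_zero, hval_one, hval_succ]
  have := u.val_lt
  have := v.val_lt
  generalize u.val = p, v.val = q at *
  split_ifs <;> omega

lemma forwardPairs_sdiff_map_swap (hn : 1 ≤ n) (x : ZMod (2 * n + 1)) :
    forwardPairs n \ (forwardPairs n).map
        ((Equiv.swap x (x + 1)).prodCongr (Equiv.swap x (x + 1))).toEmbedding =
      {(x, x + 1), (x + 1, x + (n + 1)), (x + (n + 1), x)} := by
  ext ⟨a, b⟩
  obtain ⟨u, rfl⟩ : ∃ u, a = x + u := ⟨a - x, (add_sub_cancel x a).symm⟩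
  obtain ⟨v, rfl⟩ : ∃ v, b = x + v := ⟨b - x, (add_sub_cancel x b).symm⟩
  have hswap (w : ZMod (2 * n + 1)) : Equiv.swap x (x + 1) (x + w) = x + Equiv.swap 0 1 w := by
    simpa using (add_right_injective x).swap_apply 0 1 w
  have htranslate (w w' : ZMod (2 * n + 1)) :
      (x + w, x + w') ∈ forwardPairs n ↔ (w, w') ∈ forwardPairs n := by
    simp only [mem_forwardPairs, add_sub_add_left_eq_sub]
  simpa only [mem_sdiff, mem_map_equiv, Equiv.prodCongr_symm, Equiv.symm_swap,
    Equiv.prodCongr_apply, Prod.map, hswap, htranslate, mem_insert, mem_singleton, Prod.mk.injEq,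
    add_right_inj, add_eq_left] using mem_forwardPairs_swap_zero_one hn u v

end ForwardPairs

/-- Composing with an adjacent circular transposition `τ_x = (x, x+1)` changes the
writhe by exactly `±2`. -/
theorem writhe_swap_step (n : ℕ) (hn : 1 ≤ n) (π : Equiv.Perm (ZMod (2 * n + 1)))
    (x : ZMod (2 * n + 1)) :
    writheP n (π ∘ Equiv.swap x (x + 1)) - writheP n π = 2 ∨
    writheP n (π ∘ Equiv.swap x (x + 1)) - writheP n π = -2 := by
  set τ := Equiv.swap x (x + 1)
  set f : ZMod (2 * n + 1) → ℕ := fun z => (π z).val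
  have hf : Function.Injective f := (ZMod.val_injective _).comp π.injective
  have hS : IsTournament (forwardPairs n) := isTournament_forwardPairs
  have hτ : writheP n (π ∘ τ) =
      ∑ p ∈ (forwardPairs n).map (τ.prodCongr τ).toEmbedding, ltSign (f p.1) (f p.2) := by
    rw [writheP_eq_sum_forwardPairs, sum_map]
    rfl
  have hdiff := hS.sum_sub_sum (hS.map_prodCongr τ) (f := fun p => ltSign (f p.1) (f p.2))
    fun a b hab => ltSign_swap (hf.ne hab)
  have hsdiff := forwardPairs_sdiff_map_swap hn x
  have hne (p) (hp : p ∈ ({(x, x + 1), (x + 1, x + (n + 1)), (x + (n + 1), x)} : Finset _)) :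
      p.1 ≠ p.2 :=
    hS.ne_of_mem (mem_sdiff.1 (hsdiff ▸ hp)).1
  rw [hsdiff] at hdiff
  rw [hτ, writheP_eq_sum_forwardPairs, ← neg_sub, hdiff]
  rcases sum_ltSign_cycle hf (hne (x, x + 1) (by simp)) (hne (x + 1, x + (n + 1)) (by simp))
    (hne (x + (n + 1), x) (by simp)) with h | h <;> simp [h]
end

section
/- Sorting the permutation π(x) = N − 1 − x of Z_N (N odd, N = 2n+1) to the identity using adjacent circular transpositions requires at least n² = (N−1)²/4 transpositions. -/
/-!
The writhe of `σ : Perm (ZMod (2 * n + 1))` sums, over pairs of positions `i < j`, `+1` or `-1`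
according as `σ j` lies on the half-circle just after `σ i` or just before it. Rotating the
positions does not change the writhe, so every adjacent circular transposition changes it as the
non-wrapping transposition `(0 1)` does, namely by `±2`. The identity has writhe `n ^ 2` and the
reversal `-n ^ 2`, a gap of `2 * n ^ 2` that steps of size `2` cover in no fewer than `n ^ 2` moves.
-/

/-- The reversal permutation `x ↦ N − 1 − x = −1 − x` of `ZMod N`. -/
def revPerm (N : ℕ) : Equiv.Perm (ZMod N) where
  toFun x := -1 - x
  invFun x := -1 - x
  left_inv x := by ring
  right_inv x := by ring

open Equiv Finset

lemma ZMod.val_add_one_eq_ite {m : ℕ} (i : ZMod (m + 1)) :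
    (i + 1).val = if i = -1 then 0 else i.val + 1 := by
  split_ifs with h
  · simp [h]
  · have hi : i.val ≠ m := fun hi =>
      h (ZMod.val_injective _ (hi.trans (ZMod.val_neg_one m).symm))
    have := i.val_lt
    rcases m with _ | m
    · omega
    · have hone : (1 : ZMod (m + 2)).val = 1 := ZMod.val_one'' (by omega)
      rw [ZMod.val_add_of_lt (by omega), hone]

lemma ZMod.card_filter_val_lt_val_add {m : ℕ} [NeZero m] {d : ZMod m} (hd : d ≠ 0) :
    #{i : ZMod m | i.val < (i + d).val} = m - d.val := by
  have hd0 : d.val ≠ 0 := (ZMod.val_ne_zero d).2 hd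
  have hdm := d.val_lt
  have hiff : ∀ i : ZMod m, i.val < (i + d).val ↔ i.val + d.val < m := by
    intro i
    rcases lt_or_ge (i.val + d.val) m with h | h
    · rw [ZMod.val_add_of_lt h]; omega
    · rw [ZMod.val_add_of_le h]; omega
  simp_rw [hiff]
  rw [← card_range (m - d.val)]
  refine card_nbij' ZMod.val (fun k => (k : ZMod m)) ?_ ?_ ?_ ?_
  · intro i hi
    simp only [coe_filter, mem_univ, true_and, Set.mem_ofPred_eq, coe_range, Set.mem_Iio] at hi ⊢
    omega
  · intro k hk
    simp only [coe_range, Set.mem_Iio, coe_filter, mem_univ, true_and, Set.mem_ofPred_eq] at hk ⊢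
    rw [ZMod.val_cast_of_lt (by omega)]
    omega
  · intro i _
    exact ZMod.natCast_zmod_val i
  · intro k hk
    exact ZMod.val_cast_of_lt (by simp only [coe_range, Set.mem_Iio] at hk; omega)

section Writhe

variable {n : ℕ}

def circSign (z : ZMod (2 * n + 1)) : ℤ :=
  if z.val = 0 then 0 else if z.val ≤ n then 1 else -1

lemma circSign_neg (z : ZMod (2 * n + 1)) : circSign (-z) = -circSign z := by
  have := z.val_lt
  unfold circSign
  rw [ZMod.neg_val]
  split_ifs <;> simp_all <;> omega

lemma abs_circSign_le_one (z : ZMod (2 * n + 1)) : |circSign z| ≤ 1 := by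
  unfold circSign
  split_ifs <;> simp

lemma sum_circSign : ∑ z : ZMod (2 * n + 1), circSign z = 0 := by
  have h := Equiv.sum_comp (Equiv.neg (ZMod (2 * n + 1))) circSign
  simp only [Equiv.neg_apply, circSign_neg, sum_neg_distrib] at h
  linarith

lemma sum_circSign_apply_sub (σ : Perm (ZMod (2 * n + 1))) (c : ZMod (2 * n + 1)) :
    ∑ j, circSign (σ j - c) = 0 :=
  (Equiv.sum_comp σ fun y => circSign (y - c)).trans
    ((Equiv.sum_comp (Equiv.subRight c) circSign).trans sum_circSign)

lemma sum_circSign_sub_apply (σ : Perm (ZMod (2 * n + 1))) (c : ZMod (2 * n + 1)) :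
    ∑ j, circSign (c - σ j) = 0 := by
  simp_rw [← neg_sub (σ _) c, circSign_neg, sum_neg_distrib, sum_circSign_apply_sub, neg_zero]

lemma sum_val_mul_circSign : ∑ z : ZMod (2 * n + 1), (z.val : ℤ) * circSign z = -n ^ 2 := by
  set f : ℕ → ℤ := fun k => k * if k = 0 then 0 else if k ≤ n then 1 else -1
  have hlow : ∀ k ∈ range (n + 1), f k = k := by
    intro k hk
    have := mem_range.1 hk
    simp only [f]
    split_ifs <;> simp_all
  have hhigh : ∀ k ∈ range n, f (n + 1 + k) = -(n + 1 + k : ℤ) := by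
    intro k _
    simp only [f]
    split_ifs <;> omega
  have hrange : ∑ k ∈ range (2 * n + 1), f k = -n ^ 2 := by
    rw [show 2 * n + 1 = n + 1 + n by ring, sum_range_add, sum_congr rfl hlow,
      sum_congr rfl hhigh, sum_range_succ, sum_neg_distrib]
    simp only [sum_add_distrib, sum_const, card_range, nsmul_eq_mul]
    ring
  exact (Fin.sum_univ_eq_sum_range f _).trans hrange

def writhe (σ : Perm (ZMod (2 * n + 1))) : ℤ :=
  ∑ i, ∑ j, if i.val < j.val then circSign (σ j - σ i) else 0

lemma writhe_one : writhe (1 : Perm (ZMod (2 * n + 1))) = n ^ 2 := by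
  have hcount : ∀ d : ZMod (2 * n + 1),
      ∑ i : ZMod (2 * n + 1), (if i.val < (i + d).val then circSign d else 0)
        = (2 * n + 1) * circSign d - d.val * circSign d := by
    intro d
    rw [← sum_filter, sum_const, nsmul_eq_mul]
    rcases eq_or_ne d 0 with rfl | hd
    · simp [circSign]
    · rw [ZMod.card_filter_val_lt_val_add hd, Nat.cast_sub d.val_lt.le]
      push_cast
      ring
  calc writhe (1 : Perm (ZMod (2 * n + 1)))
      = ∑ i : ZMod (2 * n + 1), ∑ d : ZMod (2 * n + 1),
          if i.val < (i + d).val then circSign d else 0 := by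
        rw [writhe]
        refine sum_congr rfl fun i _ => ?_
        rw [← Equiv.sum_comp (Equiv.addLeft i)]
        simp only [Perm.one_apply, Equiv.coe_addLeft, add_sub_cancel_left]
    _ = (2 * n + 1) * ∑ d, circSign d
          - ∑ d : ZMod (2 * n + 1), (d.val : ℤ) * circSign d := by
        rw [sum_comm, mul_sum, ← sum_sub_distrib]
        exact sum_congr rfl fun d _ => hcount d
    _ = (n : ℤ) ^ 2 := by rw [sum_circSign, sum_val_mul_circSign]; ring

lemma writhe_revPerm : writhe (revPerm (2 * n + 1)) = -writhe (1 : Perm (ZMod (2 * n + 1))) := by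
  simp only [writhe, ← sum_neg_distrib]
  refine sum_congr rfl fun i _ => sum_congr rfl fun j _ => ?_
  have hrev : revPerm (2 * n + 1) j - revPerm (2 * n + 1) i = -(j - i) := by
    change (-1 - j) - (-1 - i) = -(j - i)
    ring
  rw [hrev, circSign_neg, Perm.one_apply, Perm.one_apply]
  split_ifs <;> simp

lemma ite_val_add_one_lt (i j : ZMod (2 * n + 1)) (x : ℤ) :
    (if (i + 1).val < (j + 1).val then x else 0) =
      (if i.val < j.val then x else 0) + (if i = -1 then x else 0) - (if j = -1 then x else 0) := by
  have hlast : ∀ k : ZMod (2 * n + 1), k = -1 ↔ k.val = 2 * n := fun k =>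
    ⟨fun h => h ▸ ZMod.val_neg_one _,
      fun h => ZMod.val_injective _ (h.trans (ZMod.val_neg_one _).symm)⟩
  have := i.val_lt
  have := j.val_lt
  simp only [ZMod.val_add_one_eq_ite, hlast]
  split_ifs <;> omega

lemma writhe_mul_addRight_one (σ : Perm (ZMod (2 * n + 1))) :
    writhe (σ * Equiv.addRight 1) = writhe σ := by
  set τ : Perm (ZMod (2 * n + 1)) := σ * Equiv.addRight 1
  have hshift : writhe σ = ∑ i : ZMod (2 * n + 1), ∑ j : ZMod (2 * n + 1),
      if (i + 1).val < (j + 1).val then circSign (τ j - τ i) else 0 :=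
    (Equiv.sum_comp (Equiv.addRight 1) _).symm.trans
      (sum_congr rfl fun i _ => (Equiv.sum_comp (Equiv.addRight 1) _).symm)
  simp only [hshift, ite_val_add_one_lt, sum_add_distrib, sum_sub_distrib, sum_ite_irrel,
    sum_const_zero, sum_ite_eq', mem_univ, if_true, sum_circSign_apply_sub, sum_circSign_sub_apply,
    add_zero, sub_zero]
  rfl

lemma writhe_mul_addRight (σ : Perm (ZMod (2 * n + 1))) (c : ZMod (2 * n + 1)) :
    writhe (σ * Equiv.addRight c) = writhe σ := by
  obtain ⟨k, rfl⟩ : ∃ k : ℕ, (k : ZMod (2 * n + 1)) = c :=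
    ⟨c.val, ZMod.natCast_zmod_val c⟩
  induction k with
  | zero => simp
  | succ k ih =>
    rw [Nat.cast_succ, add_comm (k : ZMod (2 * n + 1)) 1, Equiv.addRight_add, ← mul_assoc,
      writhe_mul_addRight_one, ih]

lemma ite_val_swap_zero_one_lt (hn : 0 < n) (i j : ZMod (2 * n + 1)) (x : ℤ) :
    (if (swap 0 1 i).val < (swap 0 1 j).val then x else 0) =
      (if i.val < j.val then x else 0) + (if i = 1 then if j = 0 then x else 0 else 0)
        - (if i = 0 then if j = 1 then x else 0 else 0) := by
  have hone : (1 : ZMod (2 * n + 1)).val = 1 := ZMod.val_one'' (by omega)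
  have h0 : ∀ k : ZMod (2 * n + 1), k = 0 ↔ k.val = 0 := fun k => (ZMod.val_eq_zero k).symm
  have h1 : ∀ k : ZMod (2 * n + 1), k = 1 ↔ k.val = 1 := fun k =>
    ⟨fun h => h ▸ hone, fun h => ZMod.val_injective _ (h.trans hone.symm)⟩
  simp only [swap_apply_def, h0, h1]
  split_ifs <;> simp_all [-ZMod.val_eq_zero] <;> omega

lemma writhe_mul_swap_zero_one (hn : 0 < n) (σ : Perm (ZMod (2 * n + 1))) :
    writhe (σ * swap 0 1) = writhe σ - 2 * circSign (σ 1 - σ 0) := by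
  have hswap : writhe (σ * swap 0 1) = ∑ i : ZMod (2 * n + 1), ∑ j : ZMod (2 * n + 1),
      if (swap 0 1 i).val < (swap 0 1 j).val then circSign (σ j - σ i) else 0 := by
    rw [writhe, ← Equiv.sum_comp (swap 0 1)]
    refine sum_congr rfl fun i _ => ?_
    rw [← Equiv.sum_comp (swap 0 1)]
    simp only [Perm.mul_apply, swap_apply_self]
  simp only [hswap, ite_val_swap_zero_one_lt hn, sum_add_distrib, sum_sub_distrib, sum_ite_irrel,
    sum_const_zero, sum_ite_eq', mem_univ, if_true]
  rw [← neg_sub (σ 1), circSign_neg, writhe]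
  ring

lemma writhe_mul_swap_add_one (hn : 0 < n) (σ : Perm (ZMod (2 * n + 1)))
    (t : ZMod (2 * n + 1)) :
    writhe (σ * swap t (t + 1)) = writhe σ - 2 * circSign (σ (t + 1) - σ t) := by
  have hconj : swap t (t + 1) = Equiv.addRight t * swap 0 1 * (Equiv.addRight t)⁻¹ := by
    rw [← swap_apply_apply]
    simp [add_comm]
  rw [hconj, Equiv.neg_addRight, ← mul_assoc, ← mul_assoc, writhe_mul_addRight,
    writhe_mul_swap_zero_one hn, writhe_mul_addRight]
  simp [add_comm]

lemma writhe_sub_two_mul_length_le (hn : 0 < n) (σ : Perm (ZMod (2 * n + 1)))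
    (l : List (ZMod (2 * n + 1))) :
    writhe σ - 2 * l.length ≤ writhe (σ * (l.map fun x => swap x (x + 1)).prod) := by
  induction l generalizing σ with
  | nil => simp
  | cons t l ih =>
    have hstep : writhe σ - 2 ≤ writhe (σ * swap t (t + 1)) := by
      rw [writhe_mul_swap_add_one hn]
      linarith [(abs_le.1 (abs_circSign_le_one (σ (t + 1) - σ t))).2]
    have hrest := ih (σ * swap t (t + 1))
    simp only [List.map_cons, List.prod_cons, List.length_cons, ← mul_assoc]
    push_cast
    linarith

end Writhe

/-- Writing the reversal permutation `π(x) = N−1−x` of `Z_N`, `N = 2n+1` odd, as a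
product of adjacent circular transpositions `τ_x = (x, x+1)` requires at least
`n² = (N−1)²/4` transpositions. -/
theorem circular_bubble_sort_lower_bound (n : ℕ) (hn : 0 < n)
    (l : List (ZMod (2 * n + 1)))
    (h : (l.map (fun x => Equiv.swap x (x + 1))).prod = revPerm (2 * n + 1)) :
    n ^ 2 ≤ l.length := by
  have key := writhe_sub_two_mul_length_le hn 1 l
  rw [one_mul, h, writhe_revPerm, writhe_one] at key
  zify
  linarith
end

section
/- For any ε ∈ {±1}^v and any n with v ≤ 2n+1, the number of strictly increasing sequences 0 ≤ t₁ < t₂ < ⋯ < t_v ≤ 2n with (−1)^{t_i} = ε_i for all i equals binom(n + z(ε), v), where z(ε) is the number of runs of +1's in ε. -/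
/-- The number of maximal runs of `+1`'s in the sequence `ε 0, …, ε (v−1)`. -/
def runCount (v : ℕ) (ε : ℕ → ℤ) : ℕ :=
  ((Finset.range v).filter (fun i => ε i = 1 ∧ (i = 0 ∨ ε (i - 1) = -1))).card

/-!
Write `t i = 2 q i + p i`, the parity `p i` being prescribed by `ε i`, and let `w i` count the runs
of `+1`'s that end before position `i`, i.e. the `j < i` with `ε j = 1`, `ε (j + 1) = -1`. Then
`t i < t (i + 1)` iff `q i + w i < q (i + 1) + w (i + 1)`: the only case where the parities
matter is an even `t i` followed by an odd `t (i + 1)`, where `2q < 2q' + 1` means `q < q' + 1`.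
Hence `t ↦ q + w` maps the admissible sequences bijectively onto the strictly increasing
sequences with values in `[0, n + z(ε))`, since at the last position `t ≤ 2n` becomes
`q + w < n + z(ε)`. There are `C(n + z(ε), v)` of the latter.
-/

open Finset

lemma Fin.val_le_of_strictMono {v : ℕ} {u : Fin v → ℕ} (hu : StrictMono u) (i : Fin v) :
    (i : ℕ) ≤ u i := by
  obtain ⟨i, hi⟩ := i
  induction i with
  | zero => exact Nat.zero_le _
  | succ k ih =>
    have hlt : u ⟨k, by omega⟩ < u ⟨k + 1, hi⟩ := hu (Nat.lt_succ_self k)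
    have hle : k ≤ u ⟨k, by omega⟩ := ih (by omega)
    exact Nat.succ_le_of_lt (hle.trans_lt hlt)

lemma ncard_strictMono_lt (v m : ℕ) :
    {u : Fin v → ℕ | StrictMono u ∧ ∀ i, u i < m}.ncard = m.choose v := by
  let e : {u : Fin v → ℕ | StrictMono u ∧ ∀ i, u i < m} ≃ (Fin v ↪o Fin m) :=
    { toFun u := OrderEmbedding.ofStrictMono (fun i => ⟨u.1 i, u.2.2 i⟩) fun _ _ h => u.2.1 h
      invFun f := ⟨fun i => f i, Fin.val_strictMono.comp f.strictMono, fun i => (f i).2⟩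
      left_inv _ := rfl
      right_inv _ := rfl }
  rw [← Nat.card_coe_set_eq, Nat.card_congr (e.trans Set.powersetCard.ofFinEmbEquiv),
    Set.powersetCard.card, Nat.card_eq_fintype_card, Fintype.card_fin]

lemma neg_one_pow_eq_iff_mod_two {e : ℤ} (he : e = 1 ∨ e = -1) (t : ℕ) :
    (-1 : ℤ) ^ t = e ↔ t % 2 = if e = 1 then 0 else 1 := by
  rcases he with rfl | rfl
  · simp [neg_one_pow_eq_one_iff_even, Nat.even_iff]
  · simp [neg_one_pow_eq_neg_one_iff_odd, Nat.odd_iff]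

lemma runCount_succ (v : ℕ) (ε : ℕ → ℤ) :
    runCount (v + 1) ε = runCount v ε + if ε v = 1 ∧ (v = 0 ∨ ε (v - 1) = -1) then 1 else 0 := by
  simp only [runCount, card_filter, sum_range_succ]

namespace ParityPattern

def signParity (ε : ℕ → ℤ) (i : ℕ) : ℕ := if ε i = 1 then 0 else 1

def runEndCount (ε : ℕ → ℤ) (i : ℕ) : ℕ := #{j ∈ range i | ε j = 1 ∧ ε (j + 1) = -1}

def compress (ε : ℕ → ℤ) {v : ℕ} (t : Fin v → ℕ) (i : Fin v) : ℕ :=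
  t i / 2 + runEndCount ε i

def expand (ε : ℕ → ℤ) {v : ℕ} (u : Fin v → ℕ) (i : Fin v) : ℕ :=
  2 * (u i - runEndCount ε i) + signParity ε i

variable {ε : ℕ → ℤ}

lemma signParity_le_one (ε : ℕ → ℤ) (i : ℕ) : signParity ε i ≤ 1 := by
  unfold signParity; split <;> omega

lemma runEndCount_le (ε : ℕ → ℤ) (i : ℕ) : runEndCount ε i ≤ i :=
  (card_filter_le _ _).trans_eq (card_range i)

lemma runEndCount_succ (ε : ℕ → ℤ) (i : ℕ) :
    runEndCount ε (i + 1) = runEndCount ε i + if ε i = 1 ∧ ε (i + 1) = -1 then 1 else 0 := by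
  simp only [runEndCount, card_filter, sum_range_succ]

lemma runEndCount_add_one_eq {i : ℕ} (hε : ∀ j ≤ i, ε j = 1 ∨ ε j = -1) :
    runEndCount ε i + 1 = runCount (i + 1) ε + signParity ε i := by
  induction i with
  | zero =>
    rw [runCount_succ]
    rcases hε 0 le_rfl with h | h <;> simp [runEndCount, runCount, signParity, h]
  | succ i ih =>
    have := ih fun j hj => hε j (by omega)
    rw [runEndCount_succ, runCount_succ]
    rcases hε i (by omega) with h0 | h0 <;> rcases hε (i + 1) le_rfl with h1 | h1 <;>
      simp [signParity, h0, h1] at this ⊢ <;> omega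

lemma lt_iff_div_two_add_runEndCount_lt {i t t' : ℕ} (h1 : ε (i + 1) = 1 ∨ ε (i + 1) = -1)
    (ht : t % 2 = signParity ε i) (ht' : t' % 2 = signParity ε (i + 1)) :
    t < t' ↔ t / 2 + runEndCount ε i < t' / 2 + runEndCount ε (i + 1) := by
  rw [runEndCount_succ]
  unfold signParity at ht ht'
  split_ifs at ht ht' ⊢ <;> omega

lemma le_two_mul_iff_div_two_add_runEndCount_lt {i t : ℕ} (n : ℕ)
    (hε : ∀ j ≤ i, ε j = 1 ∨ ε j = -1) (ht : t % 2 = signParity ε i) :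
    t ≤ 2 * n ↔ t / 2 + runEndCount ε i < n + runCount (i + 1) ε := by
  have := runEndCount_add_one_eq hε
  have := signParity_le_one ε i
  omega

variable {v : ℕ}

lemma expand_mod_two (u : Fin v → ℕ) (i : Fin v) : expand ε u i % 2 = signParity ε i := by
  have := signParity_le_one ε i
  simp only [expand]
  omega

lemma expand_compress {t : Fin v → ℕ} (ht : ∀ i, t i % 2 = signParity ε i) :
    expand ε (compress ε t) = t := by
  funext i
  have := ht i
  simp only [expand, compress]
  omega

lemma compress_expand {u : Fin v → ℕ} (hu : StrictMono u) : compress ε (expand ε u) = u := by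
  funext i
  have := (runEndCount_le ε i).trans (Fin.val_le_of_strictMono hu i)
  have := signParity_le_one ε i
  simp only [expand, compress]
  omega

lemma strictMono_compress_iff (hε : ∀ i < v, ε i = 1 ∨ ε i = -1) {t : Fin v → ℕ}
    (ht : ∀ i, t i % 2 = signParity ε i) : StrictMono (compress ε t) ↔ StrictMono t := by
  cases v with
  | zero => exact ⟨fun _ i => i.elim0, fun _ i => i.elim0⟩
  | succ m =>
    simp only [Fin.strictMono_iff_lt_succ]
    exact forall_congr' fun i => (lt_iff_div_two_add_runEndCount_lt (hε (i + 1) (by omega))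
      (ht i.castSucc) (ht i.succ)).symm

lemma forall_le_two_mul_iff (n : ℕ) (hε : ∀ i < v, ε i = 1 ∨ ε i = -1) {t : Fin v → ℕ}
    (ht : ∀ i, t i % 2 = signParity ε i) (hmono : StrictMono t) :
    (∀ i, t i ≤ 2 * n) ↔ ∀ i, compress ε t i < n + runCount v ε := by
  cases v with
  | zero => exact ⟨fun _ i => i.elim0, fun _ i => i.elim0⟩
  | succ m =>
    have hmono' := (strictMono_compress_iff hε ht).2 hmono
    have hlast := le_two_mul_iff_div_two_add_runEndCount_lt n (fun j hj => hε j (by omega))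
      (ht (Fin.last m))
    exact ⟨fun h i => (hmono'.monotone (Fin.le_last i)).trans_lt (hlast.1 (h _)),
      fun h i => (hmono.monotone (Fin.le_last i)).trans (hlast.2 (h _))⟩

lemma bijOn_compress (n : ℕ) (hε : ∀ i < v, ε i = 1 ∨ ε i = -1) :
    Set.BijOn (compress ε)
      {t : Fin v → ℕ | StrictMono t ∧ (∀ i, t i ≤ 2 * n) ∧ ∀ i, t i % 2 = signParity ε i}
      {u | StrictMono u ∧ ∀ i, u i < n + runCount v ε} := by
  refine Set.InvOn.bijOn (f' := expand ε) ⟨?_, ?_⟩ ?_ ?_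
  · exact fun t ⟨_, _, ht⟩ => expand_compress ht
  · exact fun u ⟨hu, _⟩ => compress_expand hu
  · rintro t ⟨hmono, hle, ht⟩
    exact ⟨(strictMono_compress_iff hε ht).2 hmono, (forall_le_two_mul_iff n hε ht hmono).1 hle⟩
  · rintro u ⟨hmono, hlt⟩
    have ht := expand_mod_two (ε := ε) u
    have hu := compress_expand (ε := ε) hmono
    rw [← hu] at hmono hlt
    have hmono' := (strictMono_compress_iff hε ht).1 hmono
    exact ⟨hmono', (forall_le_two_mul_iff n hε ht hmono').2 hlt, ht⟩

end ParityPattern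

theorem count_parity_sequences_general (n v : ℕ) (ε : ℕ → ℤ)
    (hε : ∀ i < v, ε i = 1 ∨ ε i = -1) :
    Set.ncard {t : Fin v → ℕ | StrictMono t ∧ (∀ i, t i ≤ 2 * n) ∧
        ∀ i : Fin v, (-1 : ℤ) ^ (t i) = ε (i : ℕ)} =
      Nat.choose (n + runCount v ε) v := by
  have hparity (t : Fin v → ℕ) :
      (∀ i : Fin v, (-1 : ℤ) ^ (t i) = ε i) ↔ ∀ i, t i % 2 = ParityPattern.signParity ε i :=
    forall_congr' fun i => neg_one_pow_eq_iff_mod_two (hε i i.2) (t i)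
  simp_rw [hparity]
  rw [(ParityPattern.bijOn_compress n hε).ncard_eq, ncard_strictMono_lt]

/-- The number of strictly increasing sequences `0 ≤ t₁ < ⋯ < t_v ≤ 2n` with
`(−1)^{t_i} = ε_i` for all `i` equals `C(n + z(ε), v)`, where `z(ε)` is the number
of runs of `+1`'s in `ε`. -/
theorem count_parity_sequences (n v : ℕ) (hv : v ≤ 2 * n + 1) (ε : ℕ → ℤ)
    (hε : ∀ i < v, ε i = 1 ∨ ε i = -1) :
    Set.ncard {t : Fin v → ℕ | StrictMono t ∧ (∀ i, t i ≤ 2 * n) ∧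
        ∀ i : Fin v, (-1 : ℤ) ^ (t i) = ε (i : ℕ)} =
      Nat.choose (n + runCount v ε) v :=
  count_parity_sequences_general n v ε hε
end

section
/- For m ≥ 1, the average sign of the directed cycle C_{m+1} (vertices 1,…,m+1, edges (i, i+1 mod m+1), all oriented cyclically) equals minus the average sign of the path: A(C_{m+1}) = −A(P_{m−1}). -/
/-- `m! · A(P_{m−1})`: the sum over `σ ∈ S_m` of `∏_{i=1}^{m−1} sign(σ(i+1) − σ(i))`. -/
def pathSum (m : ℕ) : ℤ :=
  ∑ σ : Equiv.Perm (Fin m), ∏ i : Fin (m - 1),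
    if σ ⟨i.val, Nat.lt_of_succ_lt (Nat.add_lt_of_lt_sub i.isLt)⟩ <
        σ ⟨i.val + 1, Nat.add_lt_of_lt_sub i.isLt⟩
      then (1 : ℤ) else -1

/-- `(m+1)! · A(C_{m+1})`: the sum over `σ ∈ S_{m+1}` of the product of
`sign(σ(i+1) − σ(i))` over the edges of the cyclically oriented cycle on `m+1`
vertices (addition in `Fin (m+1)` is cyclic). -/
def cycleSum (m : ℕ) : ℤ :=
  ∑ σ : Equiv.Perm (Fin (m + 1)), ∏ i : Fin (m + 1),
    if σ i < σ (i + 1) then (1 : ℤ) else -1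


/-!
Every permutation of `Fin (m+1)` is, in exactly one way, a cyclic rotation of the positions
(`m+1` choices) composed with a permutation having its maximum in the last position (`m!` choices,
one for each permutation `τ` of the remaining values). Rotation does not change the cyclic sign
product. When the maximum sits last, the edge into it contributes `+1`, the edge out of it `-1`,
and the remaining edges form the path on `τ`. Hence `cycleSum m = -(m+1) · pathSum m`.
-/

open Equiv

namespace AverageSign

variable {α : Type*} [LinearOrder α] {n : ℕ}

def cycleSign (f : Fin (n + 1) → α) : ℤ :=
  ∏ i, if f i < f (i + 1) then 1 else -1

def pathSign (f : Fin (n + 1) → α) : ℤ :=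
  ∏ i : Fin n, if f i.castSucc < f i.succ then 1 else -1

lemma cycleSign_comp_addRight (f : Fin (n + 1) → α) (c : Fin (n + 1)) :
    cycleSign (f ∘ Equiv.addRight c) = cycleSign f := by
  refine Fintype.prod_equiv (Equiv.addRight c) _ _ fun i => ?_
  simp only [Function.comp_apply, coe_addRight, add_right_comm i 1 c]
  rfl

lemma cycleSign_of_forall_lt_last (f : Fin (n + 2) → α)
    (hmax : ∀ i : Fin (n + 1), f i.castSucc < f (Fin.last _)) :
    cycleSign f = -pathSign (f ∘ Fin.castSucc) := by
  have hout : ¬ f (Fin.last _) < f (Fin.last _ + 1) := by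
    rw [Fin.last_add_one]
    exact (hmax 0).not_gt
  rw [cycleSign, Fin.prod_univ_castSucc, Fin.prod_univ_castSucc, if_neg hout,
    Fin.coeSucc_eq_succ, Fin.succ_last, if_pos (hmax _), pathSign]
  simp only [Function.comp_apply, Fin.coeSucc_eq_succ, Fin.succ_castSucc]
  ring

def extendLast (τ : Perm (Fin (n + 1))) : Perm (Fin (n + 2)) :=
  permCongr finSuccEquivLast.symm (optionCongr τ)

@[simp] lemma extendLast_castSucc (τ : Perm (Fin (n + 1))) (i : Fin (n + 1)) :
    extendLast τ i.castSucc = (τ i).castSucc := by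
  simp [extendLast]

@[simp] lemma extendLast_last (τ : Perm (Fin (n + 1))) :
    extendLast τ (Fin.last _) = Fin.last _ := by
  simp [extendLast]

lemma extendLast_injective : Function.Injective (extendLast (n := n)) := by
  intro τ τ' h
  ext i
  simpa using congrArg Fin.val (congrArg (· i.castSucc) h)

lemma cycleSign_extendLast (τ : Perm (Fin (n + 1))) :
    cycleSign (extendLast τ) = -pathSign τ := by
  rw [cycleSign_of_forall_lt_last _ fun i => by simp [Fin.castSucc_lt_last]]
  congr 1
  simp only [pathSign, Function.comp_apply, extendLast_castSucc, Fin.castSucc_lt_castSucc_iff]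

def rotateExtend (p : Fin (n + 2) × Perm (Fin (n + 1))) : Perm (Fin (n + 2)) :=
  extendLast p.2 * Equiv.addRight p.1

lemma rotateExtend_injective : Function.Injective (rotateExtend (n := n)) := by
  rintro ⟨c, τ⟩ ⟨c', τ'⟩ h
  have hc : c = c' := by
    have := congrArg (· (Fin.last _ - c)) h
    simp only [rotateExtend, Perm.coe_mul, Function.comp_apply, coe_addRight, sub_add_cancel,
      extendLast_last] at this
    have := (extendLast τ').injective (this.symm.trans (extendLast_last τ').symm)
    rw [sub_add_eq_add_sub, sub_eq_iff_eq_add, add_left_cancel_iff] at this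
    exact this.symm
  subst hc
  simp only [rotateExtend, mul_left_inj] at h
  rw [extendLast_injective h]

lemma rotateExtend_bijective : Function.Bijective (rotateExtend (n := n)) := by
  rw [Fintype.bijective_iff_injective_and_card]
  refine ⟨rotateExtend_injective, ?_⟩
  simp [Fintype.card_perm, Nat.factorial_succ]

lemma cycleSum_succ (n : ℕ) : cycleSum (n + 1) = -((n + 2 : ℕ) * pathSum (n + 1)) := by
  have hpath : pathSum (n + 1) = ∑ τ : Perm (Fin (n + 1)), pathSign τ := rfl
  have hcycle : cycleSum (n + 1) = ∑ σ : Perm (Fin (n + 2)), cycleSign σ := rfl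
  have hsum : ∑ σ : Perm (Fin (n + 2)), cycleSign σ
      = ∑ p : Fin (n + 2) × Perm (Fin (n + 1)), -pathSign p.2 :=
    (Fintype.sum_bijective rotateExtend rotateExtend_bijective _ _ fun ⟨c, τ⟩ => by
      rw [rotateExtend, Perm.coe_mul, cycleSign_comp_addRight, cycleSign_extendLast]).symm
  rw [hcycle, hsum, hpath, Fintype.sum_prod_type]
  simp only [Finset.sum_const, Finset.card_univ, Fintype.card_fin, nsmul_eq_mul,
    Finset.sum_neg_distrib, mul_neg]

end AverageSign

/-- `A(C_{m+1}) = −A(P_{m−1})` for `m ≥ 1` (cleared of denominators: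
`m! · cycleSum = −(m+1)! · pathSum`). -/
theorem average_sign_cycle_eq_neg_path (m : ℕ) (hm : 1 ≤ m) :
    (Nat.factorial m : ℤ) * cycleSum m =
      -((Nat.factorial (m + 1) : ℤ) * pathSum m) := by
  obtain ⟨n, rfl⟩ : ∃ n, m = n + 1 := ⟨m - 1, by omega⟩
  rw [AverageSign.cycleSum_succ, Nat.factorial_succ (n + 1)]
  push_cast
  ring
end
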